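/- In the Earley algorithm, if [A → α • β] ∈ E_{i,j} then i ≤ j and α ⇒* a_{i+1}⋯a_j; consequently, if α contains at least one terminal-deriving symbol with nonempty yield then i < j. -/

import Mathlib

/-! Formalization of Earley parsing and the Nederhof–Satta variant. -/

variable {T N : Type}

/-- A context-free grammar: a start nonterminal and a set of productions. -/
structure CFG (T N : Type) where
  initial : N
  rules : Set (N × List (Symbol T N))

/-- One rewriting step of the grammar. -/
def CFG.Produces (g : CFG T N) (u v : List (Symbol T N)) : Prop :=
  ∃ A α p q, (A, α) ∈ g.rules ∧ u = p ++ [Symbol.nonterminal A] ++ q ∧ v = p ++ α ++ q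

/-- The derivation relation ⇒* (reflexive-transitive closure of rewriting). -/
def CFG.Derives (g : CFG T N) : List (Symbol T N) → List (Symbol T N) → Prop :=
  Relation.ReflTransGen g.Produces

/-- The language of the grammar: { w | S ⇒* w }. -/
def CFG.language (g : CFG T N) : Set (List T) :=
  { w | g.Derives [Symbol.nonterminal g.initial] (w.map Symbol.terminal) }

/-- `inputSlice w i j` is the substring a_{i+1}⋯a_j of `w` (0-based: w[i..j)), as symbols. -/
def inputSlice (w : List T) (i j : ℕ) : List (Symbol T N) :=
  ((w.take j).drop i).map Symbol.terminal

/-- The least Earley table: `Earley g w A α β i j` means the dotted item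
[A → α • β] is inserted in E_{i,j}. -/
inductive Earley (g : CFG T N) (w : List T) :
    N → List (Symbol T N) → List (Symbol T N) → ℕ → ℕ → Prop where
  | init {α} : (g.initial, α) ∈ g.rules → Earley g w g.initial [] α 0 0
  | predict {B α A β i j γ} : Earley g w B α (Symbol.nonterminal A :: β) i j →
      (A, γ) ∈ g.rules → Earley g w A [] γ j j
  | scan {A α a β i j} : Earley g w A α (Symbol.terminal a :: β) i j →
      w[j]? = some a → Earley g w A (α ++ [Symbol.terminal a]) β i (j + 1)
  | complete {A α B β i k γ j} : Earley g w A α (Symbol.nonterminal B :: β) i k →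
      Earley g w B γ [] k j → (B, γ) ∈ g.rules →
      Earley g w A (α ++ [Symbol.nonterminal B]) β i j

mutual
  /-- Forward part of the variant: `VarU g w β j` means suffix item [β] ∈ U_j. -/
  inductive VarU (g : CFG T N) (w : List T) : List (Symbol T N) → ℕ → Prop where
    | init {α} : (g.initial, α) ∈ g.rules → VarU g w α 0
    | predict {A β j γ} : VarU g w (Symbol.nonterminal A :: β) j →
        (A, γ) ∈ g.rules → VarU g w γ j
    | scan {a β j} : VarU g w (Symbol.terminal a :: β) j → w[j]? = some a →
        VarU g w β (j + 1)
    | complete {B β k γ j} : VarU g w (Symbol.nonterminal B :: β) k → (B, γ) ∈ g.rules →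
        VarT g w γ k j → VarU g w β j

  /-- Backward part of the variant: `VarT g w β j m` means suffix item [β] ∈ T_{j,m}. -/
  inductive VarT (g : CFG T N) (w : List T) : List (Symbol T N) → ℕ → ℕ → Prop where
    | empty {m} : VarU g w [] m → VarT g w [] m m
    | scan {a β j m} : VarU g w (Symbol.terminal a :: β) j → w[j]? = some a →
        VarT g w β (j + 1) m → VarT g w (Symbol.terminal a :: β) j m
    | complete {B β k γ j m} : VarU g w (Symbol.nonterminal B :: β) k → (B, γ) ∈ g.rules →
        VarT g w γ k j → VarT g w β j m → VarT g w (Symbol.nonterminal B :: β) k m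
end

/-! Each Earley rule preserves the invariant `α ⇒* a_{i+1}⋯a_j`: scanning appends the same
terminal on both sides, and completion appends `B` on the left and, through `B → γ ⇒* a_{k+1}⋯a_j`,
the matching span on the right. A symbol whose yields are all nonempty enters `α` only by scanning
or by completion over a nonempty span. -/

namespace CFG

variable {g : CFG T N}

lemma Produces.append_left {u v : List (Symbol T N)} (h : g.Produces u v)
    (x : List (Symbol T N)) : g.Produces (x ++ u) (x ++ v) := by
  obtain ⟨A, α, p, q, hr, rfl, rfl⟩ := h
  exact ⟨A, α, x ++ p, q, hr, by simp, by simp⟩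

lemma Produces.append_right {u v : List (Symbol T N)} (h : g.Produces u v)
    (x : List (Symbol T N)) : g.Produces (u ++ x) (v ++ x) := by
  obtain ⟨A, α, p, q, hr, rfl, rfl⟩ := h
  exact ⟨A, α, p, q ++ x, hr, by simp, by simp⟩

lemma Derives.append {u u' v v' : List (Symbol T N)} (hu : g.Derives u u')
    (hv : g.Derives v v') : g.Derives (u ++ v) (u' ++ v') :=
  have hleft : g.Derives (u ++ v) (u' ++ v) :=
    Relation.ReflTransGen.lift (· ++ v) (fun _ _ (h : g.Produces _ _) => h.append_right v) _ _ hu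
  have hright : g.Derives (u' ++ v) (u' ++ v') :=
    Relation.ReflTransGen.lift (u' ++ ·) (fun _ _ (h : g.Produces _ _) => h.append_left u') _ _ hv
  hleft.trans hright

lemma Derives.of_mem_rules {A : N} {γ : List (Symbol T N)} (h : (A, γ) ∈ g.rules) :
    g.Derives [Symbol.nonterminal A] γ :=
  Relation.ReflTransGen.single ⟨A, γ, [], [], h, by simp, by simp⟩

end CFG

section inputSlice

variable {w : List T} {i j k : ℕ}

lemma inputSlice_eq_nil_of_le (h : j ≤ i) : (inputSlice w i j : List (Symbol T N)) = [] := by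
  simp [inputSlice, List.drop_take, Nat.sub_eq_zero_of_le h]

lemma lt_of_inputSlice_ne_nil (h : (inputSlice w i j : List (Symbol T N)) ≠ []) : i < j :=
  lt_of_not_ge fun hji => h (inputSlice_eq_nil_of_le hji)

lemma inputSlice_append (hik : i ≤ k) (hkj : k ≤ j) :
    (inputSlice w i j : List (Symbol T N)) = inputSlice w i k ++ inputSlice w k j := by
  have hsplit : j - i = (k - i) + (j - k) := by omega
  simp only [inputSlice, List.drop_take, hsplit, List.take_add, List.drop_drop,
    Nat.add_sub_cancel' hik, List.map_append]

lemma inputSlice_succ {a : T} (hij : i ≤ j) (ha : w[j]? = some a) :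
    (inputSlice w i (j + 1) : List (Symbol T N)) = inputSlice w i j ++ [Symbol.terminal a] := by
  rw [inputSlice_append hij j.le_succ]
  simp [inputSlice, List.drop_take, List.take_one, List.head?_drop, ha]

end inputSlice

namespace Earley

variable {g : CFG T N} {w : List T} {A : N} {α β : List (Symbol T N)} {i j : ℕ}

lemma le (h : Earley g w A α β i j) : i ≤ j := by
  induction h with
  | init | predict => rfl
  | scan _ _ ih => exact ih.trans (Nat.le_succ _)
  | complete _ _ _ ih₁ ih₂ => exact ih₁.trans ih₂

lemma derives (h : Earley g w A α β i j) : g.Derives α (inputSlice w i j) := by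
  induction h with
  | init | predict => rw [inputSlice_eq_nil_of_le le_rfl]; exact .refl
  | scan hE ha ih =>
    rw [inputSlice_succ hE.le ha]
    exact ih.append .refl
  | complete hE₁ hE₂ hr ih₁ ih₂ =>
    rw [inputSlice_append hE₁.le hE₂.le]
    exact ih₁.append ((CFG.Derives.of_mem_rules hr).trans ih₂)

lemma lt_of_mem (h : Earley g w A α β i j) {X : Symbol T N} (hX : X ∈ α)
    (hne : ∀ v : List T, g.Derives [X] (v.map Symbol.terminal) → v ≠ []) : i < j := by
  induction h with
  | init | predict => simp at hX
  | scan hE => exact Nat.lt_succ_of_le hE.le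
  | complete hE₁ hE₂ hr ih₁ =>
    rcases List.mem_append.mp hX with hXα | hXB
    · exact (ih₁ hXα).trans_le hE₂.le
    · obtain rfl := List.mem_singleton.mp hXB
      have hyield := (CFG.Derives.of_mem_rules hr).trans hE₂.derives
      refine hE₁.le.trans_lt (lt_of_inputSlice_ne_nil (N := N) (w := w) ?_)
      exact List.map_eq_nil_iff.not.mpr (hne _ hyield)

end Earley

/-- if [A → α • β] ∈ E_{i,j} then i ≤ j and α ⇒* a_{i+1}⋯a_j;
consequently, if α contains a symbol all of whose terminal yields are nonempty,
then i < j. -/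
theorem earley_item_sound (g : CFG T N) (w : List T) (A : N)
    (α β : List (Symbol T N)) (i j : ℕ) (h : Earley g w A α β i j) :
    i ≤ j ∧ g.Derives α (inputSlice w i j) ∧
      ((∃ X ∈ α, ∀ v : List T, g.Derives [X] (v.map Symbol.terminal) → v ≠ []) →
        i < j) :=
  ⟨h.le, h.derives, fun ⟨_, hX, hne⟩ => h.lt_of_mem hX hne⟩
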